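/- If (B₀,B₁,B₂) is a syzygy of (x₀,x₁,x₂) in k[x₀,x₁,x₂] with each Bᵢ a sum of monomials of even total degree, then (B₀,B₁,B₂) lies in the submodule generated by the nine vectors x_k·Y_l for k,l ∈ {0,1,2}, where Y₀ = (x₁,−x₀,0), Y₁ = (x₂,0,−x₀), Y₂ = (0,x₂,−x₁). -/
import Mathlib


open MvPolynomial

/-- The three Koszul syzygies of `(x₀,x₁,x₂)`. -/
noncomputable def Ysyz (k : Type*) [CommRing k] : Fin 3 → (Fin 3 → MvPolynomial (Fin 3) k) :=
  ![![X 1, -X 0, 0], ![X 2, 0, -X 0], ![0, X 2, -X 1]]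

section Aux
variable {k : Type*} [Field k]

noncomputable def phiz (k : Type*) [Field k] (j : Fin 3) :
    MvPolynomial (Fin 3) k →ₐ[k] MvPolynomial (Fin 3) k :=
  aeval (fun i => if i = j then 0 else X i)

lemma phiz_X (j i : Fin 3) : phiz k j (X i) = if i = j then 0 else X i := by
  simp [phiz]

lemma phiz_decomp (j : Fin 3) (p : MvPolynomial (Fin 3) k) :
    ∃ q, p = phiz k j p + X j * q := by
  induction p using MvPolynomial.induction_on with
  | C a => exact ⟨0, by simp [phiz]⟩
  | add p q hp hq =>
    obtain ⟨u, hu⟩ := hp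
    obtain ⟨v, hv⟩ := hq
    exact ⟨u + v, by rw [map_add]; linear_combination hu + hv⟩
  | mul_X p i hp =>
    obtain ⟨u, hu⟩ := hp
    by_cases hij : i = j
    · subst hij
      refine ⟨p, ?_⟩
      rw [map_mul, phiz_X, if_pos rfl]
      ring
    · refine ⟨u * X i, ?_⟩
      rw [map_mul, phiz_X, if_neg hij]
      linear_combination X i * hu

lemma exists_A (B : Fin 3 → MvPolynomial (Fin 3) k)
    (hB : ∑ i : Fin 3, B i * X i = 0) :
    ∃ A : Fin 3 → MvPolynomial (Fin 3) k, ∀ i, B i = ∑ l : Fin 3, A l * Ysyz k l i := by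
  obtain ⟨C1, hC1⟩ := phiz_decomp 0 (B 1)
  obtain ⟨C2, hC2⟩ := phiz_decomp 0 (B 2)
  obtain ⟨D, hD⟩ := phiz_decomp 2 (phiz k 0 (B 1))
  rw [Fin.sum_univ_three] at hB
  -- apply phiz 0
  have h0 : phiz k 0 (B 1) * X 1 + phiz k 0 (B 2) * X 2 = 0 := by
    have := congrArg (phiz k 0) hB
    simpa [phiz_X] using this
  -- apply phiz 2 to h0
  have h2 : phiz k 2 (phiz k 0 (B 1)) * X 1 = 0 := by
    have := congrArg (phiz k 2) h0
    simpa [phiz_X] using this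
  have hX1 : (X 1 : MvPolynomial (Fin 3) k) ≠ 0 := X_ne_zero 1
  have hB1 : phiz k 0 (B 1) = X 2 * D := by
    rcases mul_eq_zero.1 h2 with h | h
    · rw [hD, h, zero_add]
    · exact absurd h hX1
  have hB2 : phiz k 0 (B 2) = -(D * X 1) := by
    have : X 2 * (D * X 1 + phiz k 0 (B 2)) = 0 := by
      rw [hB1] at h0; ring_nf; ring_nf at h0; linear_combination h0
    rcases mul_eq_zero.1 this with h | h
    · exact absurd h (X_ne_zero 2)
    · linear_combination h
  have hB0 : B 0 = -(C1 * X 1) - C2 * X 2 := by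
    have hx : X 0 * (B 0 + C1 * X 1 + C2 * X 2) = 0 := by
      rw [hC1, hC2, hB1, hB2] at hB; linear_combination hB
    rcases mul_eq_zero.1 hx with h | h
    · exact absurd h (X_ne_zero 0)
    · linear_combination h
  refine ⟨![-C1, -C2, D], ?_⟩
  intro i
  fin_cases i <;>
    simp [Ysyz, Fin.sum_univ_three] <;>
    [linear_combination hB0; linear_combination hC1 + hB1; linear_combination hC2 + hB2]
end Aux


section Aux2
variable {k : Type*} [Field k]

/-- The sum of the odd-degree monomials of `p`. -/
noncomputable def Opart (p : MvPolynomial (Fin 3) k) : MvPolynomial (Fin 3) k :=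
  ∑ d ∈ p.support.filter (fun d => ¬ Even (∑ t : Fin 3, d t)),
    monomial d (coeff d p)

lemma coeff_Opart (p : MvPolynomial (Fin 3) k) (e : Fin 3 →₀ ℕ) :
    coeff e (Opart p) = if Even (∑ t : Fin 3, e t) then 0 else coeff e p := by
  classical
  rw [Opart, coeff_sum]
  simp only [coeff_monomial]
  rw [Finset.sum_ite_eq' _ e (fun d => coeff d p)]
  by_cases he : Even (∑ t : Fin 3, e t)
  · simp [he]
  · by_cases hs : e ∈ p.support
    · simp [he, hs]
    · simp [he, hs, MvPolynomial.notMem_support_iff.1 hs]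

lemma sum_sub_single (d : Fin 3 →₀ ℕ) (j : Fin 3) (hj : d j ≠ 0) :
    (∑ t : Fin 3, (d - Finsupp.single j 1 : Fin 3 →₀ ℕ) t) + 1 = ∑ t : Fin 3, d t := by
  simp only [Fin.sum_univ_three, Finsupp.sub_apply, Finsupp.single_apply]
  fin_cases j <;> simp_all <;> omega

lemma coeff_Opart_mul_X (p : MvPolynomial (Fin 3) k) (j : Fin 3) (d : Fin 3 →₀ ℕ)
    (hd : Even (∑ t : Fin 3, d t)) :
    coeff d (Opart p * X j) = coeff d (p * X j) := by
  classical
  rw [coeff_mul_X', coeff_mul_X']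
  by_cases hj : j ∈ d.support
  · rw [if_pos hj, if_pos hj, coeff_Opart, if_neg]
    intro hev
    have := sum_sub_single d j (Finsupp.mem_support_iff.1 hj)
    rw [Nat.even_iff] at hd hev
    omega
  · rw [if_neg hj, if_neg hj]

lemma coeff_Opart_mul_X_odd (p : MvPolynomial (Fin 3) k) (j : Fin 3) (d : Fin 3 →₀ ℕ)
    (hd : ¬ Even (∑ t : Fin 3, d t)) :
    coeff d (Opart p * X j) = 0 := by
  classical
  rw [coeff_mul_X']
  by_cases hj : j ∈ d.support
  · rw [if_pos hj, coeff_Opart, if_pos]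
    have := sum_sub_single d j (Finsupp.mem_support_iff.1 hj)
    rw [Nat.even_iff] at hd ⊢
    omega
  · rw [if_neg hj]

lemma Opart_odd_support (p : MvPolynomial (Fin 3) k) :
    ∀ d ∈ (Opart p).support, ¬ Even (∑ t : Fin 3, d t) := by
  intro d hd hev
  rw [MvPolynomial.mem_support_iff, coeff_Opart, if_pos hev] at hd
  exact hd rfl

lemma odd_exists_rep (q : MvPolynomial (Fin 3) k)
    (h : ∀ d ∈ q.support, ¬ Even (∑ t : Fin 3, d t)) :
    ∃ C : Fin 3 → MvPolynomial (Fin 3) k, ∑ i : Fin 3, C i • X i = q := by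
  have hq : q ∈ Ideal.span (Set.range (X : Fin 3 → MvPolynomial (Fin 3) k)) := by
    rw [← Set.image_univ, MvPolynomial.mem_ideal_span_X_image]
    intro m hm
    by_contra hc
    push_neg at hc
    refine h m hm ?_
    have : ∀ t : Fin 3, m t = 0 := fun t => hc t (Set.mem_univ t)
    simp [this]
  exact (Finsupp.mem_span_range_iff_exists_finsupp.mp hq).elim
    (fun c hc => ⟨c, by simpa [Finsupp.sum_fintype] using hc⟩)

end Aux2
section Aux3
variable {k : Type*} [Field k]

lemma Opart_neg (p : MvPolynomial (Fin 3) k) : Opart (-p) = -Opart p := by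
  ext d
  rw [coeff_neg, coeff_Opart, coeff_Opart, coeff_neg]
  split <;> simp

lemma refine2 (b p q : MvPolynomial (Fin 3) k) (u v : Fin 3)
    (hb : ∀ d ∈ b.support, Even (∑ t : Fin 3, d t))
    (h : b = p * X u + q * X v) :
    b = Opart p * X u + Opart q * X v := by
  ext d
  by_cases hd : Even (∑ t : Fin 3, d t)
  · rw [h, coeff_add, coeff_add, coeff_Opart_mul_X _ _ _ hd, coeff_Opart_mul_X _ _ _ hd]
  · have hb0 : coeff d b = 0 := by
      by_contra hc
      exact hd (hb d (MvPolynomial.mem_support_iff.2 hc))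
    rw [hb0, coeff_add, coeff_Opart_mul_X_odd _ _ _ hd, coeff_Opart_mul_X_odd _ _ _ hd,
      add_zero]

end Aux3


theorem even_syzygies_generated_by_xk_Yl (k : Type*) [Field k]
    (B : Fin 3 → MvPolynomial (Fin 3) k)
    (heven : ∀ i : Fin 3, ∀ d ∈ (B i).support, Even (∑ t : Fin 3, d t))
    (hB : ∑ i : Fin 3, B i * X i = 0) :
    B ∈ Submodule.span (MvPolynomial (Fin 3) k)
      (Set.range fun p : Fin 3 × Fin 3 => (X p.1 : MvPolynomial (Fin 3) k) • Ysyz k p.2) := by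
  classical
  obtain ⟨A, hA⟩ := exists_A B hB
  set O : Fin 3 → MvPolynomial (Fin 3) k := fun l => Opart (A l) with hO
  have key : ∀ i, B i = ∑ l : Fin 3, O l * Ysyz k l i := by
    intro i
    fin_cases i
    · have h := refine2 (B 0) (A 0) (A 1) 1 2 (heven 0)
        (by rw [hA 0]; simp [Ysyz, Fin.sum_univ_three])
      simpa [Ysyz, Fin.sum_univ_three, hO] using h
    · have h := refine2 (B 1) (-(A 0)) (A 2) 0 2 (heven 1)
        (by rw [hA 1]; simp [Ysyz, Fin.sum_univ_three])
      rw [Opart_neg] at h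
      simp only [Ysyz, Fin.sum_univ_three, hO]
      simpa [Ysyz, hO] using h.trans (by ring)
    · have h := refine2 (B 2) (-(A 1)) (-(A 2)) 0 1 (heven 2)
        (by rw [hA 2]; simp [Ysyz, Fin.sum_univ_three])
      rw [Opart_neg, Opart_neg] at h
      simpa [Ysyz, Fin.sum_univ_three, hO] using h.trans (by ring)
  have hOodd : ∀ l, ∀ d ∈ (O l).support, ¬ Even (∑ t : Fin 3, d t) := fun l =>
    Opart_odd_support (A l)
  choose C hC using fun l => odd_exists_rep (O l) (hOodd l)
  rw [Submodule.mem_span_range_iff_exists_fun]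
  refine ⟨fun p => C p.2 p.1, ?_⟩
  funext i
  have hsum : ∀ l, ∑ a : Fin 3, C l a * (X a * Ysyz k l i) = O l * Ysyz k l i := by
    intro l
    rw [← hC l, Finset.sum_mul]
    simp [smul_eq_mul, mul_assoc]
  calc (∑ p : Fin 3 × Fin 3, C p.2 p.1 • (X p.1 • Ysyz k p.2)) i
      = ∑ p : Fin 3 × Fin 3, C p.2 p.1 * (X p.1 * Ysyz k p.2 i) := by
        simp [Finset.sum_apply, smul_eq_mul]
    _ = ∑ a : Fin 3, ∑ l : Fin 3, C l a * (X a * Ysyz k l i) := by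
        rw [Fintype.sum_prod_type]
    _ = ∑ l : Fin 3, ∑ a : Fin 3, C l a * (X a * Ysyz k l i) := Finset.sum_comm
    _ = ∑ l : Fin 3, O l * Ysyz k l i := by simp only [hsum]
    _ = B i := (key i).symm
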